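/- arXiv:1010.1826 — 2 statements merged into one kernel-verified Lean document; each statement's English description precedes it below -/
import Mathlib

section
/- If β0γ is an element of a cut C of the infinite complete binary tree, then there exists a unique natural number k such that β1 0^k (the string β followed by 1 followed by k zeros) is in C. -/
/-!
Follow the sequence `β1000…` (with `0 = false`, `1 = true`). Its unique prefix `c` in the cut is
longer than `β`: otherwise `c` would be a prefix of `β0γ ∈ C`, and two elements of a cut are never
comparable. So `c` is `β10^k` for `k = |c| - |β| - 1`, and any `β10^k'` in `C` is another prefix
of the same sequence, hence equal to `c`.
-/

/-- `l` is a prefix of the infinite binary sequence `f`. -/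
def IsPrefixOfSeq (l : List Bool) (f : ℕ → Bool) : Prop :=
  ∀ i : Fin l.length, l.get i = f i

/-- A cut of the infinite complete binary tree: a finite set of binary strings such that
every infinite binary sequence has exactly one element of the cut as a prefix. -/
def IsCut (C : Finset (List Bool)) : Prop :=
  ∀ f : ℕ → Bool, ∃! c, c ∈ C ∧ IsPrefixOfSeq c f

namespace IsPrefixOfSeq

variable {l₁ l₂ : List Bool} {f : ℕ → Bool}

theorem getElem_eq (h : IsPrefixOfSeq l₁ f) (n : ℕ) (hn : n < l₁.length) : l₁[n] = f n :=
  h ⟨n, hn⟩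

theorem prefix_of_length_le (h₁ : IsPrefixOfSeq l₁ f) (h₂ : IsPrefixOfSeq l₂ f)
    (hl : l₁.length ≤ l₂.length) : l₁ <+: l₂ := by
  rw [List.prefix_iff_eq_take]
  refine List.ext_getElem (by simp [hl]) fun n hn _ => ?_
  simp [h₁.getElem_eq, h₂.getElem_eq]

theorem eq_of_length_eq (h₁ : IsPrefixOfSeq l₁ f) (h₂ : IsPrefixOfSeq l₂ f)
    (hl : l₁.length = l₂.length) : l₁ = l₂ :=
  (h₁.prefix_of_length_le h₂ hl.le).eq_of_length hl

theorem of_prefix (h : l₁ <+: l₂) (h₂ : IsPrefixOfSeq l₂ f) : IsPrefixOfSeq l₁ f := fun i => by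
  simpa [h₂.getElem_eq] using h.getElem i.2

end IsPrefixOfSeq

theorem isPrefixOfSeq_append_replicate_getD (l : List Bool) (b : Bool) (k : ℕ) :
    IsPrefixOfSeq (l ++ List.replicate k b) (l.getD · b) := by
  intro ⟨n, hn⟩
  simp only [List.get_eq_getElem, List.getElem_append, List.getElem_replicate]
  split_ifs with h
  · simp [h]
  · simp [not_lt.mp h]

namespace IsCut

variable {C : Finset (List Bool)} {l₁ l₂ : List Bool}

theorem eq_of_isPrefixOfSeq (hC : IsCut C) {f : ℕ → Bool} (h₁ : l₁ ∈ C) (h₂ : l₂ ∈ C)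
    (hf₁ : IsPrefixOfSeq l₁ f) (hf₂ : IsPrefixOfSeq l₂ f) : l₁ = l₂ :=
  (hC f).unique ⟨h₁, hf₁⟩ ⟨h₂, hf₂⟩

theorem eq_of_prefix (hC : IsCut C) (h₁ : l₁ ∈ C) (h₂ : l₂ ∈ C) (h : l₁ <+: l₂) : l₁ = l₂ := by
  have hf₂ : IsPrefixOfSeq l₂ (l₂.getD · false) := by
    simpa using isPrefixOfSeq_append_replicate_getD l₂ false 0
  exact hC.eq_of_isPrefixOfSeq h₁ h₂ (hf₂.of_prefix h) hf₂

end IsCut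

/-- If β0γ is in a cut C, then there is a unique k such that β1 0^k is in C.
(0 = `false`, 1 = `true`.) -/
theorem stmt1 (C : Finset (List Bool)) (hC : IsCut C) (β γ : List Bool)
    (h : β ++ false :: γ ∈ C) :
    ∃! k : ℕ, β ++ true :: List.replicate k false ∈ C := by
  have hf (k : ℕ) : IsPrefixOfSeq (β ++ true :: List.replicate k false)
      ((β ++ [true]).getD · false) := by
    simpa using isPrefixOfSeq_append_replicate_getD (β ++ [true]) false k
  obtain ⟨c, ⟨hcC, hcf⟩, -⟩ := hC ((β ++ [true]).getD · false)
  have hβc : β.length < c.length := by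
    by_contra! hle
    have hcβ : c <+: β := hcf.prefix_of_length_le ((hf 0).of_prefix (List.prefix_append _ _)) hle
    have hc : c = β ++ false :: γ := hC.eq_of_prefix hcC h (hcβ.trans (List.prefix_append _ _))
    simp [hc] at hle
  obtain ⟨k, hk⟩ := Nat.exists_eq_add_of_lt hβc
  have hc : β ++ true :: List.replicate k false = c :=
    (hf k).eq_of_length_eq hcf (by simp [hk]; omega)
  subst hc
  exact ⟨k, hcC, fun k' hk' => by simpa using hC.eq_of_isPrefixOfSeq hk' hcC (hf k') hcf⟩
end

section
/- Let D be a prefix-closed set of strings over a finite rule alphabet R with probabilities P : R → (0,1], and suppose for all p > 0 the set of strings in D with probability ≥ p is finite. Consider a best-first search that maintains a priority queue of elements of D ordered by probability, starts from the empty string, and at each step removes the highest-probability element w and inserts all one-rule extensions wr ∈ D. Then for every w ∈ D, the string w is the removed (top-ranked) element at some finite step. -/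
/-!
If a string `w` entered the queue but were never removed, it would stay there forever, so from
then on every removed string would have probability at least `P w` and hence lie in a finite set.
This is impossible, as each string is removed only finitely often. By induction on length, every
`w ∈ D` does enter the queue: its parent is removed at some step, which inserts `w`.
-/

theorem Nat.exists_not_and_succ_of_le {p : ℕ → Prop} {a b : ℕ} (hab : a ≤ b) (ha : ¬p a)
    (hb : p b) : ∃ m, a ≤ m ∧ m < b ∧ ¬p m ∧ p (m + 1) := by
  induction b, hab using Nat.le_induction with
  | base => exact absurd hb ha
  | succ b hab ih =>
    by_cases hpb : p b
    · obtain ⟨m, ham, hmb, hm⟩ := ih hpb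
      exact ⟨m, ham, hmb.trans b.lt_succ_self, hm⟩
    · exact ⟨b, hab, b.lt_succ_self, hpb, hb⟩

section

open Filter Finset

variable {R : Type*} [Fintype R] [DecidableEq R] {D : Set (List R)} [DecidablePred (· ∈ D)]
  {Q : ℕ → Finset (List R)} {t : ℕ → List R}

def BestFirstStep (D : Set (List R)) [DecidablePred (· ∈ D)] (Q : ℕ → Finset (List R))
    (t : ℕ → List R) : Prop :=
  ∀ n, Q n ≠ ∅ → Q (n + 1) = (Q n).erase (t n) ∪
    (univ.filter (fun r : R => t n ++ [r] ∈ D)).image (fun r => t n ++ [r])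

namespace BestFirstStep

variable {n : ℕ} {v : List R}

theorem mem_succ_iff (hstep : BestFirstStep D Q t) (hn : Q n ≠ ∅) :
    v ∈ Q (n + 1) ↔ v ≠ t n ∧ v ∈ Q n ∨ ∃ r, t n ++ [r] ∈ D ∧ t n ++ [r] = v := by
  rw [hstep n hn]
  simp

theorem top_notMem_succ (hstep : BestFirstStep D Q t) (hn : Q n ≠ ∅) : t n ∉ Q (n + 1) := by
  rw [hstep.mem_succ_iff hn]
  rintro (⟨hne, -⟩ | ⟨r, -, hr⟩)
  · exact hne rfl
  · simpa using congrArg List.length hr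

theorem mem_succ_of_mem (hstep : BestFirstStep D Q t) (hv : v ∈ Q n) (hvt : v ≠ t n) :
    v ∈ Q (n + 1) :=
  (hstep.mem_succ_iff (Finset.ne_empty_of_mem hv)).2 (Or.inl ⟨hvt, hv⟩)

theorem append_mem_succ (hstep : BestFirstStep D Q t) (hn : Q n ≠ ∅) {r : R}
    (hr : t n ++ [r] ∈ D) : t n ++ [r] ∈ Q (n + 1) :=
  (hstep.mem_succ_iff hn).2 (Or.inr ⟨r, hr, rfl⟩)

theorem exists_eq_append_of_notMem_of_mem_succ (hstep : BestFirstStep D Q t) (hn : Q n ≠ ∅)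
    (hv : v ∉ Q n) (hv' : v ∈ Q (n + 1)) : ∃ r, v = t n ++ [r] := by
  rcases (hstep.mem_succ_iff hn).1 hv' with ⟨-, hmem⟩ | ⟨r, -, rfl⟩
  · exact absurd hmem hv
  · exact ⟨r, rfl⟩

theorem mem_of_le_of_forall_ne (hstep : BestFirstStep D Q t) {N : ℕ} (hN : v ∈ Q N)
    (hv : ∀ n, Q n ≠ ∅ → t n ≠ v) {m : ℕ} (hm : N ≤ m) : v ∈ Q m := by
  induction m, hm using Nat.le_induction with
  | base => exact hN
  | succ m _ ih => exact hstep.mem_succ_of_mem ih (hv m (Finset.ne_empty_of_mem ih)).symm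

theorem exists_eq_append_between (hstep : BestFirstStep D Q t)
    (hmem : ∀ n, Q n ≠ ∅ → t n ∈ Q n) {N : ℕ} (hne : ∀ m, N ≤ m → Q m ≠ ∅) {m₁ m₂ : ℕ}
    (hm₁ : N ≤ m₁) (h₁₂ : m₁ < m₂) (ht₁ : t m₁ = v) (ht₂ : t m₂ = v) :
    ∃ m, m₁ < m ∧ m < m₂ ∧ ∃ r, v = t m ++ [r] := by
  have hleft : v ∉ Q (m₁ + 1) := ht₁ ▸ hstep.top_notMem_succ (hne m₁ hm₁)
  have hback : v ∈ Q m₂ := ht₂ ▸ hmem m₂ (hne m₂ (hm₁.trans h₁₂.le))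
  obtain ⟨m, hm₁m, hmm₂, hout, hin⟩ :=
    Nat.exists_not_and_succ_of_le (p := (v ∈ Q ·)) h₁₂ hleft hback
  exact ⟨m, hm₁m, hmm₂,
    hstep.exists_eq_append_of_notMem_of_mem_succ (hne m (by omega)) hout hin⟩

theorem frequently_exists_eq_append (hstep : BestFirstStep D Q t)
    (hmem : ∀ n, Q n ≠ ∅ → t n ∈ Q n) {N : ℕ} (hne : ∀ m, N ≤ m → Q m ≠ ∅)
    (h : ∃ᶠ m in atTop, t m = v) : ∃ᶠ m in atTop, ∃ r, v = t m ++ [r] := by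
  rw [frequently_atTop] at h ⊢
  intro a
  obtain ⟨m₁, hm₁, ht₁⟩ := h (max a N)
  obtain ⟨m₂, hm₂, ht₂⟩ := h (m₁ + 1)
  obtain ⟨m, hm₁m, -, hm⟩ :=
    exists_eq_append_between hstep hmem hne (le_of_max_le_right hm₁) hm₂ ht₁ ht₂
  exact ⟨m, (le_of_max_le_left hm₁).trans hm₁m.le, hm⟩

/-- Every string is removed only finitely often: by induction on its length, since each removal
after the first is preceded by a removal of its parent, and the empty string has no parent. -/
theorem eventually_ne (hstep : BestFirstStep D Q t)
    (hmem : ∀ n, Q n ≠ ∅ → t n ∈ Q n) {N : ℕ} (hne : ∀ m, N ≤ m → Q m ≠ ∅) (v : List R) :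
    ∀ᶠ m in atTop, t m ≠ v := by
  induction v using List.reverseRecOn with
  | nil =>
    refine not_frequently.1 fun h => ?_
    obtain ⟨m, r, hm⟩ := (frequently_exists_eq_append hstep hmem hne h).exists
    simp at hm
  | append_singleton u r ih =>
    refine not_frequently.1 fun h => ?_
    refine (not_frequently.2 ih) ((frequently_exists_eq_append hstep hmem hne h).mono ?_)
    rintro m ⟨r', hm⟩
    exact (List.append_inj' hm rfl).1.symm

theorem exists_eq_top_of_mem {α : Type*} [LinearOrder α] {prio : List R → α}
    (hstep : BestFirstStep D Q t) (hfin : ∀ w ∈ D, {v ∈ D | prio w ≤ prio v}.Finite)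
    (hQD : ∀ n, ∀ w ∈ Q n, w ∈ D)
    (htop : ∀ n, Q n ≠ ∅ → t n ∈ Q n ∧ ∀ w ∈ Q n, prio w ≤ prio (t n))
    {w : List R} {N : ℕ} (hN : w ∈ Q N) : ∃ n, Q n ≠ ∅ ∧ t n = w := by
  by_contra hw
  have hstays : ∀ m, N ≤ m → w ∈ Q m := fun m =>
    hstep.mem_of_le_of_forall_ne hN fun n hn htn => hw ⟨n, hn, htn⟩
  have hne : ∀ m, N ≤ m → Q m ≠ ∅ := fun m hm => Finset.ne_empty_of_mem (hstays m hm)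
  have hmem : ∀ n, Q n ≠ ∅ → t n ∈ Q n := fun n hn => (htop n hn).1
  let S := {v ∈ D | prio w ≤ prio v}
  have hinS : ∀ᶠ m in atTop, t m ∈ S := by
    filter_upwards [eventually_ge_atTop N] with m hm
    exact ⟨hQD m _ (hmem m (hne m hm)), (htop m (hne m hm)).2 w (hstays m hm)⟩
  have hnotinS : ∀ᶠ m in atTop, ∀ v ∈ S, t m ≠ v :=
    (hfin w (hQD N w hN)).eventually_all.2 fun v _ => hstep.eventually_ne hmem hne v
  obtain ⟨m, hm, hm'⟩ := (hinS.and hnotinS).exists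
  exact hm' _ hm rfl

end BestFirstStep

end

theorem stmt6_general {R : Type*} [Fintype R] [DecidableEq R] (P : R → ℝ)
    (hP : ∀ r, 0 < P r ∧ P r ≤ 1)
    (D : Set (List R)) [DecidablePred (· ∈ D)]
    (hpc : ∀ w ∈ D, ∀ q : List R, q <+: w → q ∈ D)
    (hfin : ∀ p : ℝ, 0 < p → {w ∈ D | p ≤ (w.map P).prod}.Finite)
    (Q : ℕ → Finset (List R)) (t : ℕ → List R)
    (hQ0 : Q 0 = {([] : List R)})
    (hQD : ∀ n, ∀ w ∈ Q n, w ∈ D)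
    (htop : ∀ n, Q n ≠ ∅ →
      t n ∈ Q n ∧ ∀ w ∈ Q n, (w.map P).prod ≤ ((t n).map P).prod)
    (hstep : ∀ n, Q n ≠ ∅ →
      Q (n + 1) = (Q n).erase (t n) ∪
        (Finset.univ.filter (fun r : R => t n ++ [r] ∈ D)).image (fun r => t n ++ [r])) :
    ∀ w ∈ D, ∃ n : ℕ, Q n ≠ ∅ ∧ t n = w := by
  have hpos : ∀ w : List R, 0 < (w.map P).prod := fun w =>
    List.prod_pos (by simpa using fun r _ => (hP r).1)
  have hremoved : ∀ w N, w ∈ Q N → ∃ n, Q n ≠ ∅ ∧ t n = w := fun w N hN =>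
    BestFirstStep.exists_eq_top_of_mem (prio := fun w => (w.map P).prod) hstep
      (fun w _ => hfin _ (hpos w)) hQD htop hN
  intro w hw
  induction w using List.reverseRecOn with
  | nil => exact hremoved [] 0 (by simp [hQ0])
  | append_singleton u r ih =>
    obtain ⟨n, hn, rfl⟩ := ih (hpc _ hw u (List.prefix_append _ _))
    exact hremoved _ (n + 1) (BestFirstStep.append_mem_succ hstep hn hw)

/-- Completeness of the best-first (priority queue) search: starting from the empty string,
repeatedly removing a maximum-probability queue element and inserting all its one-rule
extensions in D, every element of D is eventually the removed (top-ranked) element,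
provided that for every p > 0 only finitely many strings in D have probability ≥ p. -/
theorem stmt6 {R : Type*} [Fintype R] [DecidableEq R] (P : R → ℝ)
    (hP : ∀ r, 0 < P r ∧ P r ≤ 1)
    (D : Set (List R)) [DecidablePred (· ∈ D)]
    (hD : ([] : List R) ∈ D)
    (hpc : ∀ w ∈ D, ∀ q : List R, q <+: w → q ∈ D)
    (hfin : ∀ p : ℝ, 0 < p → {w ∈ D | p ≤ (w.map P).prod}.Finite)
    (Q : ℕ → Finset (List R)) (t : ℕ → List R)
    (hQ0 : Q 0 = {([] : List R)})
    (hQD : ∀ n, ∀ w ∈ Q n, w ∈ D)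
    (htop : ∀ n, Q n ≠ ∅ →
      t n ∈ Q n ∧ ∀ w ∈ Q n, (w.map P).prod ≤ ((t n).map P).prod)
    (hstep : ∀ n, Q n ≠ ∅ →
      Q (n + 1) = (Q n).erase (t n) ∪
        (Finset.univ.filter (fun r : R => t n ++ [r] ∈ D)).image (fun r => t n ++ [r])) :
    ∀ w ∈ D, ∃ n : ℕ, Q n ≠ ∅ ∧ t n = w :=
  stmt6_general P hP D hpc hfin Q t hQ0 hQD htop hstep
end
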